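/- Let W ∼ N(0,1) independent of V ∼ (1/2)N(−s,1) + (1/2)N(s,1), and define G(α,β) = E[W·tanh(αV + βW)]. Then for all α ∈ ℝ and β ≥ 0, G(α,β) ≤ β·(1 − (α² + β²)/(2 + 4(α² + β²))). -/

import Mathlib

/-!
By Stein's lemma, `G(α,β) = β·E[sech²(αV + βW)]`. Pointwise
`sech² x ≤ 1/(1 + x²) ≤ (1 + e^{-x²})/2`, and on each component of the mixture `αV + βW` is
Gaussian with variance `σ² = α² + β²`, so `E[e^{-(αV+βW)²}] ≤ (1 + 2σ²)^{-1/2}`. Hence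
`G ≤ β(1 + (1 + 2σ²)^{-1/2})/2`, which is below the claimed bound because
`(√(1 + 2σ²) - 1)² ≥ 0`.
-/

open MeasureTheory ProbabilityTheory
open scoped ENNReal

/-- The symmetric two-component Gaussian mixture `(1/2)N(−s,1) + (1/2)N(s,1)`. -/
noncomputable def mixG (s : ℝ) : Measure ℝ :=
  (1 / 2 : ℝ≥0∞) • gaussianReal (-s) 1 + (1 / 2 : ℝ≥0∞) • gaussianReal s 1

/-- `F(α,β) = E[V·tanh(αV + βW)]` with `V ∼ mixG s` independent of `W ∼ N(0,1)`. -/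
noncomputable def Fmap (s α β : ℝ) : ℝ :=
  ∫ p : ℝ × ℝ, p.1 * Real.tanh (α * p.1 + β * p.2)
    ∂((mixG s).prod (gaussianReal 0 1))

/-- `G(α,β) = E[W·tanh(αV + βW)]` with `V ∼ mixG s` independent of `W ∼ N(0,1)`. -/
noncomputable def Gmap (s α β : ℝ) : ℝ :=
  ∫ p : ℝ × ℝ, p.2 * Real.tanh (α * p.1 + β * p.2)
    ∂((mixG s).prod (gaussianReal 0 1))

open Real
open scoped NNReal

namespace Real

theorem hasDerivAt_tanh (x : ℝ) : HasDerivAt tanh (1 - tanh x ^ 2) x := by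
  have h := (hasDerivAt_sinh x).div (hasDerivAt_cosh x) (cosh_pos x).ne'
  rw [show tanh = sinh / cosh from funext tanh_eq_sinh_div_cosh]
  refine h.congr_deriv ?_
  simp only [Pi.div_apply]
  field_simp

@[fun_prop]
theorem continuous_tanh : Continuous tanh :=
  continuous_iff_continuousAt.2 fun x => (hasDerivAt_tanh x).continuousAt

theorem abs_one_sub_tanh_sq_le_one (x : ℝ) : |1 - tanh x ^ 2| ≤ 1 :=
  abs_le.2 ⟨by linarith [tanh_sq_lt_one x], sub_le_self _ (sq_nonneg _)⟩

theorem abs_exp_neg_sq_le_one (x : ℝ) : |exp (-x ^ 2)| ≤ 1 := by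
  rw [abs_exp, exp_le_one_iff, neg_nonpos]
  positivity

theorem one_sub_tanh_sq_le_inv_one_add_sq (x : ℝ) : 1 - tanh x ^ 2 ≤ (1 + x ^ 2)⁻¹ := by
  have hsinh : x ^ 2 ≤ sinh x ^ 2 := by
    rw [← sq_abs x, ← sq_abs (sinh x), abs_sinh]
    gcongr
    exact self_le_sinh_iff.2 (abs_nonneg x)
  rw [tanh_eq_sinh_div_cosh, div_pow, one_sub_div (by positivity), cosh_sq, add_sub_cancel_left,
    one_div]
  exact inv_anti₀ (by positivity) (by linarith)

theorem inv_one_add_le_one_add_exp_neg_div_two {t : ℝ} (ht : 0 ≤ t) :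
    (1 + t)⁻¹ ≤ (1 + exp (-t)) / 2 := by
  rw [inv_le_iff_one_le_mul₀' (by positivity)]
  rcases le_total t 1 with h | h
  · nlinarith [add_one_le_exp (-t)]
  · nlinarith [exp_pos (-t)]

theorem one_sub_tanh_sq_le_one_add_exp_neg_sq_div_two (x : ℝ) :
    1 - tanh x ^ 2 ≤ (1 + exp (-x ^ 2)) / 2 :=
  (one_sub_tanh_sq_le_inv_one_add_sq x).trans
    (inv_one_add_le_one_add_exp_neg_div_two (sq_nonneg x))

end Real

namespace ProbabilityTheory

theorem hasDerivAt_gaussianPDFReal (μ : ℝ) (v : ℝ≥0) (x : ℝ) :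
    HasDerivAt (gaussianPDFReal μ v) (-((x - μ) / v) * gaussianPDFReal μ v x) x := by
  have h := ((((hasDerivAt_id x).sub_const μ).pow 2).neg.div_const (2 * (v : ℝ))).exp.const_mul
    (√(2 * π * v))⁻¹
  rw [gaussianPDFReal_def]
  refine h.congr_deriv ?_
  rcases eq_or_ne (v : ℝ) 0 with hv | hv
  · simp [hv]
  · simp only [id, Pi.neg_apply, Pi.pow_apply, Nat.cast_ofNat]
    field_simp
    ring

theorem integrable_sub_mul_gaussianPDFReal (μ : ℝ) (v : ℝ≥0) :
    Integrable fun x => (x - μ) * gaussianPDFReal μ v x := by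
  rcases eq_or_ne v 0 with rfl | hv
  · simp
  convert ((integrable_mul_exp_neg_mul_sq (b := 1 / (2 * v)) (by positivity)).const_mul
    (√(2 * π * v))⁻¹).comp_sub_right μ using 2 with x
  rw [gaussianPDFReal, show -(x - μ) ^ 2 / (2 * v) = -(1 / (2 * v)) * (x - μ) ^ 2 by ring]
  ring

/-- Stein's lemma. -/
theorem integral_sub_mul_gaussianReal {μ : ℝ} {v : ℝ≥0} {f f' : ℝ → ℝ} {C C' : ℝ}
    (hf : ∀ x, HasDerivAt f (f' x) x) (hfC : ∀ x, |f x| ≤ C)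
    (hf' : Continuous f') (hf'C : ∀ x, |f' x| ≤ C') :
    ∫ x, (x - μ) * f x ∂gaussianReal μ v = v * ∫ x, f' x ∂gaussianReal μ v := by
  rcases eq_or_ne v 0 with rfl | hv
  · simp [gaussianReal_zero_var]
  have hfc : Continuous f := continuous_iff_continuousAt.2 fun x => (hf x).continuousAt
  have hpdf' : Integrable fun x => -((x - μ) / v) * gaussianPDFReal μ v x := by
    convert (integrable_sub_mul_gaussianPDFReal μ v).const_mul (-(v : ℝ)⁻¹) using 2 with x
    ring
  have hparts := integral_mul_deriv_eq_deriv_mul_of_integrable (u := f) (v := gaussianPDFReal μ v)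
    (fun x _ => hf x) (fun x _ => hasDerivAt_gaussianPDFReal μ v x)
    (hpdf'.bdd_mul hfc.aestronglyMeasurable (.of_forall hfC))
    ((integrable_gaussianPDFReal μ v).bdd_mul hf'.aestronglyMeasurable (.of_forall hf'C))
    ((integrable_gaussianPDFReal μ v).bdd_mul hfc.aestronglyMeasurable (.of_forall hfC))
  simp only [integral_gaussianReal_eq_integral_smul hv, smul_eq_mul]
  calc ∫ x, gaussianPDFReal μ v x * ((x - μ) * f x)
      = -v * ∫ x, f x * (-((x - μ) / v) * gaussianPDFReal μ v x) := by
        rw [← integral_const_mul]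
        congr 1 with x
        field_simp
    _ = v * ∫ x, gaussianPDFReal μ v x * f' x := by
        rw [hparts]
        simp_rw [mul_comm (f' _)]
        ring

theorem integral_exp_neg_sq_gaussianReal (μ : ℝ) (v : ℝ≥0) :
    ∫ x, exp (-x ^ 2) ∂gaussianReal μ v = exp (-μ ^ 2 / (1 + 2 * v)) / √(1 + 2 * v) := by
  rcases eq_or_ne v 0 with rfl | hv
  · simp [gaussianReal_zero_var]
  set b : ℝ := (1 + 2 * v) / (2 * v)
  have hsq : ∀ x, gaussianPDFReal μ v x * exp (-x ^ 2)
      = (√(2 * π * v))⁻¹ * exp (-μ ^ 2 / (1 + 2 * v))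
          * exp (-b * (x - μ / (1 + 2 * v)) ^ 2) := by
    intro x
    simp only [gaussianPDFReal, mul_assoc, ← exp_add]
    congr 2
    simp only [b]
    field_simp
    ring
  simp_rw [integral_gaussianReal_eq_integral_smul hv, smul_eq_mul, hsq]
  rw [integral_const_mul, integral_sub_right_eq_self (fun x => exp (-b * x ^ 2)), integral_gaussian,
    show π / b = 2 * π * v / (1 + 2 * v) by simp only [b]; field_simp, sqrt_div (by positivity)]
  field_simp

theorem integral_exp_neg_sq_gaussianReal_le (μ : ℝ) (v : ℝ≥0) :
    ∫ x, exp (-x ^ 2) ∂gaussianReal μ v ≤ (√(1 + 2 * v))⁻¹ := by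
  rw [integral_exp_neg_sq_gaussianReal, div_eq_mul_inv]
  refine mul_le_of_le_one_left (by positivity) (exp_le_one_iff.2 ?_)
  exact div_nonpos_of_nonpos_of_nonneg (neg_nonpos.2 (sq_nonneg μ)) (by positivity)

theorem gaussianReal_prod_map_linear (a b m₁ m₂ : ℝ) (v₁ v₂ : ℝ≥0) :
    ((gaussianReal m₁ v₁).prod (gaussianReal m₂ v₂)).map (fun p => a * p.1 + b * p.2)
      = gaussianReal (a * m₁ + b * m₂)
          (.mk (a ^ 2) (sq_nonneg a) * v₁ + .mk (b ^ 2) (sq_nonneg b) * v₂) := by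
  rw [← gaussianReal_conv_gaussianReal, ← gaussianReal_map_const_mul,
    ← gaussianReal_map_const_mul, Measure.conv,
    Measure.map_prod_map _ _ (measurable_const_mul a) (measurable_const_mul b),
    Measure.map_map (by fun_prop) (by fun_prop)]
  rfl

theorem integral_exp_neg_sq_linear_gaussianReal_prod_le (α β m : ℝ) :
    ∫ p, exp (-(α * p.1 + β * p.2) ^ 2) ∂(gaussianReal m 1).prod (gaussianReal 0 1)
      ≤ (√(1 + 2 * (α ^ 2 + β ^ 2)))⁻¹ := by
  rw [← integral_map (by fun_prop) (by fun_prop) (f := fun x => exp (-x ^ 2)),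
    gaussianReal_prod_map_linear]
  convert integral_exp_neg_sq_gaussianReal_le _ _ using 4
  simp

end ProbabilityTheory

theorem integrable_comp_linear_of_abs_le {μ : Measure (ℝ × ℝ)} [IsFiniteMeasure μ]
    {g : ℝ → ℝ} (hg : Continuous g) {C : ℝ} (hC : ∀ x, |g x| ≤ C) (α β : ℝ) :
    Integrable (fun p => g (α * p.1 + β * p.2)) μ :=
  .of_bound (by fun_prop) C (.of_forall fun p => hC _)

instance isProbabilityMeasure_mixG (s : ℝ) : IsProbabilityMeasure (mixG s) := by
  constructor
  simp [mixG, ENNReal.inv_two_add_inv_two]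

theorem integral_mixG_prod {s : ℝ} {ν : Measure ℝ} [SFinite ν] {f : ℝ × ℝ → ℝ}
    (hf : ∀ m, Integrable f ((gaussianReal m 1).prod ν)) :
    ∫ p, f p ∂(mixG s).prod ν
      = (∫ p, f p ∂(gaussianReal (-s) 1).prod ν
          + ∫ p, f p ∂(gaussianReal s 1).prod ν) / 2 := by
  rw [mixG, Measure.add_prod, Measure.prod_smul_left, Measure.prod_smul_left,
    integral_add_measure ((hf _).smul_measure (by simp)) ((hf _).smul_measure (by simp)),
    integral_smul_measure, integral_smul_measure]
  simp only [ENNReal.toReal_div, ENNReal.toReal_one, ENNReal.toReal_ofNat, smul_eq_mul]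
  ring

theorem integral_exp_neg_sq_linear_mixG_prod_le (s α β : ℝ) :
    ∫ p, exp (-(α * p.1 + β * p.2) ^ 2) ∂(mixG s).prod (gaussianReal 0 1)
      ≤ (√(1 + 2 * (α ^ 2 + β ^ 2)))⁻¹ := by
  rw [integral_mixG_prod fun m => integrable_comp_linear_of_abs_le (by fun_prop)
    abs_exp_neg_sq_le_one α β]
  linarith [integral_exp_neg_sq_linear_gaussianReal_prod_le α β (-s),
    integral_exp_neg_sq_linear_gaussianReal_prod_le α β s]

theorem integral_mul_tanh_gaussianReal (c β : ℝ) :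
    ∫ w, w * tanh (c + β * w) ∂gaussianReal 0 1
      = β * ∫ w, (1 - tanh (c + β * w) ^ 2) ∂gaussianReal 0 1 := by
  have hderiv (w : ℝ) :
      HasDerivAt (fun w => tanh (c + β * w)) (β * (1 - tanh (c + β * w) ^ 2)) w :=
    ((hasDerivAt_tanh _).comp w (((hasDerivAt_id w).const_mul β).const_add c)).congr_deriv
      (by simp [mul_comm])
  have hbound (w : ℝ) : |β * (1 - tanh (c + β * w) ^ 2)| ≤ |β| := by
    rw [abs_mul]
    exact mul_le_of_le_one_right (abs_nonneg β) (abs_one_sub_tanh_sq_le_one _)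
  simpa [integral_const_mul] using integral_sub_mul_gaussianReal (μ := 0) (v := 1) hderiv
    (fun w => (abs_tanh_lt_one _).le) (by fun_prop) hbound

theorem Gmap_eq_mul_integral_one_sub_tanh_sq (s α β : ℝ) :
    Gmap s α β
      = β * ∫ p, (1 - tanh (α * p.1 + β * p.2) ^ 2) ∂(mixG s).prod (gaussianReal 0 1) := by
  have hW : Integrable (fun p : ℝ × ℝ => p.2 * tanh (α * p.1 + β * p.2))
      ((mixG s).prod (gaussianReal 0 1)) :=
    (((memLp_id_gaussianReal 1).integrable le_rfl).comp_snd _).mul_bdd (by fun_prop)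
      (.of_forall fun p => (abs_tanh_lt_one _).le)
  rw [Gmap, integral_prod _ hW,
    integral_prod _
      (integrable_comp_linear_of_abs_le (by fun_prop) abs_one_sub_tanh_sq_le_one α β),
    ← integral_const_mul]
  congr 1 with v
  exact integral_mul_tanh_gaussianReal (α * v) β

theorem integral_one_sub_tanh_sq_linear_mixG_prod_le (s α β : ℝ) :
    ∫ p, (1 - tanh (α * p.1 + β * p.2) ^ 2) ∂(mixG s).prod (gaussianReal 0 1)
      ≤ (1 + (√(1 + 2 * (α ^ 2 + β ^ 2)))⁻¹) / 2 := by
  have hexp := integrable_comp_linear_of_abs_le (μ := (mixG s).prod (gaussianReal 0 1))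
    (by fun_prop) abs_exp_neg_sq_le_one α β
  calc ∫ p, (1 - tanh (α * p.1 + β * p.2) ^ 2) ∂(mixG s).prod (gaussianReal 0 1)
      ≤ ∫ p, (1 + exp (-(α * p.1 + β * p.2) ^ 2)) / 2 ∂(mixG s).prod (gaussianReal 0 1) :=
        integral_mono
          (integrable_comp_linear_of_abs_le (by fun_prop) abs_one_sub_tanh_sq_le_one α β)
          (((integrable_const 1).add hexp).div_const 2)
          fun p => one_sub_tanh_sq_le_one_add_exp_neg_sq_div_two _
    _ = (1 + ∫ p, exp (-(α * p.1 + β * p.2) ^ 2) ∂(mixG s).prod (gaussianReal 0 1)) / 2 := by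
        rw [integral_div, integral_add (integrable_const _) hexp, integral_const]
        simp
    _ ≤ (1 + (√(1 + 2 * (α ^ 2 + β ^ 2)))⁻¹) / 2 := by
        gcongr
        exact integral_exp_neg_sq_linear_mixG_prod_le s α β

theorem one_add_inv_sqrt_div_two_le {t : ℝ} (ht : 0 ≤ t) :
    (1 + (√(1 + 2 * t))⁻¹) / 2 ≤ 1 - t / (2 + 4 * t) := by
  set T := √(1 + 2 * t)
  have hT2 : T ^ 2 = 1 + 2 * t := sq_sqrt (by positivity)
  have hT : 0 < T := by positivity
  have hgap : 1 - t / (2 + 4 * t) - (1 + T⁻¹) / 2 = (T - 1) ^ 2 / (4 * T ^ 2) := by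
    rw [show 2 + 4 * t = 2 * T ^ 2 by linarith, show t = (T ^ 2 - 1) / 2 by linarith]
    field_simp
    ring
  linarith [show 0 ≤ (T - 1) ^ 2 / (4 * T ^ 2) by positivity]

/-- `G(α,β) ≤ β·(1 − (α² + β²)/(2 + 4(α² + β²)))` for all `α` and `β ≥ 0`. -/
theorem stmt_13 (s α β : ℝ) (hβ : 0 ≤ β) :
    Gmap s α β ≤ β * (1 - (α ^ 2 + β ^ 2) / (2 + 4 * (α ^ 2 + β ^ 2))) := by
  rw [Gmap_eq_mul_integral_one_sub_tanh_sq]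
  gcongr
  exact (integral_one_sub_tanh_sq_linear_mixG_prod_le s α β).trans
    (one_add_inv_sqrt_div_two_le (by positivity))
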